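/- arXiv:1204.2709 — 6 statements merged into one kernel-verified Lean document; each statement's English description precedes it below -/
import Mathlib

section
/- Let a : ℕ → ℤ satisfy a(0) = 1, a(1) = 1, and the quadratic recurrence a(n) = 1 + 2·∑_{m=1}^{n-1} a(m)·a(n−m) for all n ≥ 2. Then the formal power series G(x) = ∑_{n≥0} a(n)·xⁿ over ℚ satisfies (1 − x)·(2·G² − 5·G + 2) + 1 = 0. -/
open PowerSeries

/-! For `n ≥ 1` the recurrence says exactly that the `n`-th coefficient of `2 G²` is `5 a(n) - 1`,
so every coefficient of `2 G² - 5 G + 2` equals `-1`, i.e. `2 G² - 5 G + 2 = -1 / (1 - x)`. -/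

section
variable {R : Type*} [CommRing R] {a : ℕ → R}

theorem two_mul_sum_range_succ_mul_sub_eq (h0 : a 0 = 1) (h1 : a 1 = 1)
    (hrec : ∀ n, 2 ≤ n → a n = 1 + 2 * ∑ m ∈ Finset.Ico 1 n, a m * a (n - m))
    {n : ℕ} (hn : 1 ≤ n) :
    2 * ∑ m ∈ Finset.range (n + 1), a m * a (n - m) = 5 * a n - 1 := by
  obtain rfl | hn2 := hn.eq_or_lt
  · norm_num [Finset.sum_range_succ, h0, h1]
  · have hsplit : ∑ m ∈ Finset.range (n + 1), a m * a (n - m)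
        = a 0 * a n + ∑ m ∈ Finset.Ico 1 n, a m * a (n - m) + a n * a 0 := by
      rw [Finset.sum_range_succ, Finset.range_eq_Ico, Finset.sum_eq_sum_Ico_succ_bot (by omega)]
      simp only [Nat.sub_zero, Nat.sub_self]
    rw [hsplit, h0, hrec n hn2]
    ring

theorem two_mul_mk_sq_sub_five_mul_mk_add_two (h0 : a 0 = 1) (h1 : a 1 = 1)
    (hrec : ∀ n, 2 ≤ n → a n = 1 + 2 * ∑ m ∈ Finset.Ico 1 n, a m * a (n - m)) :
    2 * mk a ^ 2 - 5 * mk a + 2 = -mk 1 := by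
  ext n
  have hsq : coeff n (mk a ^ 2) = ∑ m ∈ Finset.range (n + 1), a m * a (n - m) := by
    rw [sq, coeff_mul, Finset.Nat.sum_antidiagonal_eq_sum_range_succ_mk]
    simp only [coeff_mk]
  rw [← map_ofNat C 2, ← map_ofNat C 5]
  simp only [map_add, map_sub, map_neg, coeff_C_mul, coeff_C, coeff_mk, hsq, Pi.one_apply]
  obtain rfl | hn := Nat.eq_zero_or_pos n
  · norm_num [h0]
  · rw [two_mul_sum_range_succ_mul_sub_eq h0 h1 hrec hn, if_neg hn.ne']
    ring

end

theorem stmt_1 (a : ℕ → ℤ) (h0 : a 0 = 1) (h1 : a 1 = 1)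
    (hrec : ∀ n, 2 ≤ n → a n = 1 + 2 * ∑ m ∈ Finset.Ico 1 n, a m * a (n - m)) :
    (1 - (X : ℚ⟦X⟧)) * (2 * (PowerSeries.mk fun n => (a n : ℚ))^2
      - 5 * (PowerSeries.mk fun n => (a n : ℚ)) + 2) + 1 = 0 := by
  have hrecℚ : ∀ n, 2 ≤ n →
      (a n : ℚ) = 1 + 2 * ∑ m ∈ Finset.Ico 1 n, (a m : ℚ) * a (n - m) := fun n hn => by
    exact_mod_cast hrec n hn
  rw [two_mul_mk_sq_sub_five_mul_mk_add_two (by simp [h0]) (by simp [h1]) hrecℚ, mul_neg,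
    mul_comm, mk_one_mul_one_sub_eq_one, neg_add_cancel]
end

section
/- Let a : ℕ → ℤ satisfy a(0) = 1, a(1) = 1, and the quadratic recurrence a(n) = 1 + 2·∑_{m=1}^{n-1} a(m)·a(n−m) for all n ≥ 2. Then a satisfies the linear recurrence n·a(n) = (10n − 14)·a(n−1) + (18 − 9n)·a(n−2) for all n ≥ 2. -/
/-!
The generating function `G = ∑ a n Xⁿ` satisfies the algebraic equation
`(1 - X) (2G² - 5G) = 2X - 3`, which is the quadratic recurrence read coefficientwise.
Differentiating it, and eliminating `G` with `(1 - X) (4G - 5)² = 1 - 9X` (completing the square),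
gives the differential equation `(1 - X) (1 - 9X) G' = 5 - 4G`; its coefficients are the linear
recurrence.
-/

namespace PowerSeries

variable {R : Type*} [CommRing R]

@[simp]
theorem coeff_ofNat_mul (n : ℕ) [n.AtLeastTwo] (k : ℕ) (f : R⟦X⟧) :
    coeff k (ofNat(n) * f) = ofNat(n) * coeff k f := by
  rw [← map_ofNat C, coeff_C_mul]

@[simp]
theorem coeff_succ_ofNat (n : ℕ) [n.AtLeastTwo] (k : ℕ) :
    coeff (k + 1) (ofNat(n) : R⟦X⟧) = 0 := by
  rw [← map_ofNat C, coeff_C, if_neg k.succ_ne_zero]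

@[simp]
theorem derivative_ofNat (n : ℕ) [n.AtLeastTwo] : d⁄dX R (ofNat(n)) = 0 := by
  rw [← map_ofNat C, derivative_C]

theorem coeff_X_mul_derivative (f : R⟦X⟧) (n : ℕ) :
    coeff n (X * d⁄dX R f) = n * coeff n f := by
  rcases n with _ | n
  · simp
  · rw [coeff_succ_X_mul, coeff_derivative, mul_comm]
    push_cast
    rfl

theorem coeff_mk_sq (a : ℕ → R) (n : ℕ) :
    coeff n (mk a ^ 2) = ∑ m ∈ Finset.range (n + 1), a m * a (n - m) := by
  rw [sq, coeff_mul, Finset.Nat.sum_antidiagonal_eq_sum_range_succ_mk]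
  simp only [coeff_mk]

end PowerSeries

open PowerSeries

section

variable {R : Type*} [CommRing R]

theorem sum_range_mul_eq_two_mul_add_sum_Ico (a : ℕ → R) (h0 : a 0 = 1) {n : ℕ} (hn : 1 ≤ n) :
    ∑ m ∈ Finset.range (n + 1), a m * a (n - m)
      = 2 * a n + ∑ m ∈ Finset.Ico 1 n, a m * a (n - m) := by
  rw [Finset.sum_range_succ, Finset.range_eq_Ico, Finset.sum_eq_sum_Ico_succ_bot (by omega)]
  simp only [h0, one_mul, Nat.sub_zero, Nat.sub_self, mul_one]
  ring

theorem one_sub_X_mul_quadratic_eq (a : ℕ → R) (h0 : a 0 = 1) (h1 : a 1 = 1)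
    (hrec : ∀ n, 2 ≤ n → a n = 1 + 2 * ∑ m ∈ Finset.Ico 1 n, a m * a (n - m)) :
    (1 - X) * (2 * mk a ^ 2 - 5 * mk a) = 2 * X - 3 := by
  have hrec' : ∀ n, 1 ≤ n → a n = 1 + 2 * ∑ m ∈ Finset.Ico 1 n, a m * a (n - m) := by
    intro n hn
    rcases hn.eq_or_lt with rfl | hn
    · simp [h1]
    · exact hrec n hn
  set H := 2 * mk a ^ 2 - 5 * mk a
  have hcoeff : ∀ n, coeff n H = if n = 0 then -3 else -1 := by
    intro n
    rw [map_sub, coeff_ofNat_mul, coeff_ofNat_mul, coeff_mk_sq, coeff_mk]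
    split_ifs with hn
    · subst hn
      norm_num [h0]
    · rw [sum_range_mul_eq_two_mul_add_sum_Ico a h0 (by omega), hrec' n (by omega)]
      ring
  have h2X3 : (2 * X - 3 : R⟦X⟧) = C 2 * X - C 3 := by simp [map_ofNat]
  ext n
  rw [h2X3, sub_mul, one_mul]
  rcases n with _ | _ | n
  · simpa using hcoeff 0
  · norm_num [coeff_succ_X_mul, hcoeff, coeff_C]
  · simp [coeff_succ_X_mul, hcoeff]

theorem derivative_eq_of_quadratic [IsDomain R] {G : R⟦X⟧} (hG : constantCoeff G = 1)
    (hE : (1 - X) * (2 * G ^ 2 - 5 * G) = 2 * X - 3) :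
    (1 - X) * (1 - 9 * X) * d⁄dX R G = 5 - 4 * G := by
  have hderiv : (1 - X) * ((4 * G - 5) * d⁄dX R G) - (2 * G ^ 2 - 5 * G) = 2 := by
    have h := congrArg (d⁄dX R) hE
    simp only [Derivation.leibniz, Derivation.leibniz_pow, map_sub, Derivation.map_one_eq_zero,
      derivative_X, derivative_ofNat, smul_eq_mul, nsmul_eq_mul] at h
    linear_combination h
  have hsq : (1 - X) * (4 * G - 5) ^ 2 = 1 - 9 * X := by linear_combination 8 * hE
  have hne : (1 - X) * (4 * G - 5) ≠ 0 := by
    intro h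
    have h' := congrArg constantCoeff h
    norm_num [hG, map_ofNat] at h'
  apply mul_left_cancel₀ hne
  linear_combination (1 - 9 * X) * ((1 - X) * hderiv + hE) + hsq

theorem recurrence_of_derivative_eq (a : ℕ → R)
    (h : (1 - X) * (1 - 9 * X) * d⁄dX R (mk a) = 5 - 4 * mk a) (n : ℕ) (hn : 2 ≤ n) :
    (n : R) * a n = (10 * n - 14) * a (n - 1) + (18 - 9 * n) * a (n - 2) := by
  obtain ⟨k, rfl⟩ : ∃ k, n = k + 2 := ⟨n - 2, by omega⟩
  have hk := congrArg (coeff (k + 1))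
    (show d⁄dX R (mk a) - 10 * (X * d⁄dX R (mk a)) + 9 * (X * (X * d⁄dX R (mk a)))
      = 5 - 4 * mk a by linear_combination h)
  simp only [map_add, map_sub, coeff_ofNat_mul, coeff_succ_ofNat, coeff_succ_X_mul,
    coeff_X_mul_derivative, coeff_derivative, coeff_mk] at hk
  simp only [Nat.add_sub_cancel, show k + 2 - 1 = k + 1 by omega]
  push_cast at hk ⊢
  linear_combination hk

end

theorem stmt_2 (a : ℕ → ℤ) (h0 : a 0 = 1) (h1 : a 1 = 1)
    (hrec : ∀ n, 2 ≤ n → a n = 1 + 2 * ∑ m ∈ Finset.Ico 1 n, a m * a (n - m)) :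
    ∀ n : ℕ, 2 ≤ n →
      (n : ℤ) * a n = (10 * n - 14) * a (n - 1) + (18 - 9 * n) * a (n - 2) := by
  have hG : constantCoeff (mk a) = 1 := by simp [h0]
  exact recurrence_of_derivative_eq a
    (derivative_eq_of_quadratic hG (one_sub_X_mul_quadratic_eq a h0 h1 hrec))
end

section
/- If a : ℕ → ℚ satisfies a(0) = 1, a(1) = 1, and n·a(n) = (10n − 14)·a(n−1) + (18 − 9n)·a(n−2) for n ≥ 2, then a(n) is an integer for all n. -/
open Finset

private def Fz (n k : ℕ) : ℤ := (n.choose k : ℤ) * 2 ^ k * (catalan k : ℤ)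

private lemma Fz_zero (n k : ℕ) (h : n < k) : Fz n k = 0 := by
  simp [Fz, Nat.choose_eq_zero_of_lt h]

private lemma L1 (n k : ℕ) :
    ((k : ℤ) + 1) * ((k : ℤ) + 2) * Fz n (k + 1)
      = 4 * (2 * (k : ℤ) + 1) * ((n : ℤ) - k) * Fz n k := by
  have hcat : ((k : ℤ) + 1) * (((k : ℤ) + 2) * (catalan (k + 1) : ℤ))
      = 2 * (2 * (k : ℤ) + 1) * (((k : ℤ) + 1) * (catalan k : ℤ)) := by
    have h1 := succ_mul_catalan_eq_centralBinom (k + 1)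
    have h2 := Nat.succ_mul_centralBinom_succ k
    have h3 := succ_mul_catalan_eq_centralBinom k
    have : (k + 1) * ((k + 1 + 1) * catalan (k + 1))
        = 2 * (2 * k + 1) * ((k + 1) * catalan k) := by
      rw [h1, h3, h2]
    exact_mod_cast this
  rcases le_or_gt k n with hk | hk
  · have hch : ((n.choose (k + 1) : ℤ)) * ((k : ℤ) + 1)
        = (n.choose k : ℤ) * ((n : ℤ) - k) := by
      have h := congrArg (Nat.cast : ℕ → ℤ) (Nat.choose_succ_right_eq n k)
      push_cast [Nat.cast_sub hk] at h
      linarith [h]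
    apply mul_left_cancel₀ (show ((k : ℤ) + 1) ≠ 0 by positivity)
    unfold Fz
    linear_combination (((k:ℤ)+1) * (n.choose (k+1) : ℤ) * 2 ^ (k+1)) * hcat
      + (2 * (2*(k:ℤ)+1) * (catalan k : ℤ) * 2 ^ (k+1) * ((k:ℤ)+1)) * hch
  · rw [Fz_zero n (k+1) (by omega), Fz_zero n k hk]
    ring

private lemma L2 (n k : ℕ) :
    ((n : ℤ) + 1) * Fz n k = ((n : ℤ) + 1 - k) * Fz (n + 1) k := by
  rcases le_or_gt k (n + 1) with hk | hk
  · have h := congrArg (Nat.cast : ℕ → ℤ) (Nat.choose_mul_succ_eq n k)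
    push_cast [Nat.cast_sub hk] at h
    unfold Fz
    linear_combination (2 ^ k * (catalan k : ℤ)) * h
  · rw [Fz_zero n k (by omega), Fz_zero (n+1) k (by omega)]
    ring

private lemma M (n k : ℕ) :
    ((n : ℤ) + 2) * ((n : ℤ) + 3) * Fz (n + 2) k
      - ((n : ℤ) + 2) * (10 * (n : ℤ) + 16) * Fz (n + 1) k
      + 9 * ((n : ℤ) + 2) * ((n : ℤ) + 1) * Fz n k
    = (k : ℤ) * ((k : ℤ) + 1) * Fz (n + 2) k
      - ((k : ℤ) + 1) * ((k : ℤ) + 2) * Fz (n + 2) (k + 1) := by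
  have h1 := L1 (n + 2) k
  have h2 := L2 (n + 1) k
  have h3 := L2 n k
  push_cast at h1 h2
  linear_combination h1 + 9 * ((n:ℤ)+2) * h3
    + (9 * ((n:ℤ)+1-(k:ℤ)) - (10*(n:ℤ)+16)) * h2

private def Sz (n : ℕ) : ℤ := ∑ k ∈ range (n + 1), Fz n k

private lemma Srec (n : ℕ) :
    ((n : ℤ) + 2) * ((n : ℤ) + 3) * Sz (n + 2)
      = ((n : ℤ) + 2) * (10 * (n : ℤ) + 16) * Sz (n + 1)
        - 9 * ((n : ℤ) + 2) * ((n : ℤ) + 1) * Sz n := by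
  have hsum := Finset.sum_congr rfl (fun k (_ : k ∈ range (n + 3)) => M n k)
  set g : ℕ → ℤ := fun k => (k : ℤ) * ((k : ℤ) + 1) * Fz (n + 2) k with hg
  have htel : ∑ k ∈ range (n + 3),
      ((k : ℤ) * ((k : ℤ) + 1) * Fz (n + 2) k
        - ((k : ℤ) + 1) * ((k : ℤ) + 2) * Fz (n + 2) (k + 1)) = 0 := by
    have step : ∀ k ∈ range (n + 3),
        (k : ℤ) * ((k : ℤ) + 1) * Fz (n + 2) k
          - ((k : ℤ) + 1) * ((k : ℤ) + 2) * Fz (n + 2) (k + 1)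
        = g k - g (k + 1) := by
      intro k _
      simp only [hg]
      push_cast
      ring
    rw [Finset.sum_congr rfl step, Finset.sum_range_sub' g (n + 3)]
    simp only [hg]
    rw [Fz_zero (n + 2) (n + 3) (by omega)]
    push_cast
    ring
  rw [htel] at hsum
  have e1 : ∑ k ∈ range (n + 3), Fz (n + 1) k = Sz (n + 1) := by
    rw [Finset.sum_range_succ, Fz_zero (n + 1) (n + 2) (by omega)]
    simp [Sz]
  have e0 : ∑ k ∈ range (n + 3), Fz n k = Sz n := by
    rw [Finset.sum_range_succ, Finset.sum_range_succ,
      Fz_zero n (n + 2) (by omega), Fz_zero n (n + 1) (by omega)]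
    simp [Sz]
  rw [Finset.sum_add_distrib, Finset.sum_sub_distrib, ← Finset.mul_sum,
    ← Finset.mul_sum, ← Finset.mul_sum, e1, e0] at hsum
  have e2 : ∑ k ∈ range (n + 3), Fz (n + 2) k = Sz (n + 2) := rfl
  rw [e2] at hsum
  linarith [hsum]

private def Bz : ℕ → ℤ
  | 0 => 1
  | n + 1 => Sz n

private lemma Sz_zero : Sz 0 = 1 := by
  norm_num [Sz, Fz, Finset.sum_range_succ]

private lemma Sz_one : Sz 1 = 3 := by
  norm_num [Sz, Fz, Finset.sum_range_succ, catalan_one]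

private lemma Brec (n : ℕ) :
    ((n : ℚ) + 2) * (Bz (n + 2) : ℚ)
      = (10 * ((n : ℚ) + 2) - 14) * (Bz (n + 1) : ℚ)
        + (18 - 9 * ((n : ℚ) + 2)) * (Bz n : ℚ) := by
  cases n with
  | zero =>
      show (((0:ℕ) : ℚ) + 2) * (Sz 1 : ℚ)
          = (10 * (((0:ℕ) : ℚ) + 2) - 14) * (Sz 0 : ℚ)
            + (18 - 9 * (((0:ℕ) : ℚ) + 2)) * ((1 : ℤ) : ℚ)
      rw [Sz_zero, Sz_one]; norm_num
  | succ m =>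
      have hq : ((m : ℚ) + 2) * ((m : ℚ) + 3) * (Sz (m + 2) : ℚ)
          = ((m : ℚ) + 2) * (10 * (m : ℚ) + 16) * (Sz (m + 1) : ℚ)
            - 9 * ((m : ℚ) + 2) * ((m : ℚ) + 1) * (Sz m : ℚ) := by
        exact_mod_cast congrArg (Int.cast : ℤ → ℚ) (Srec m)
      have hm2 : ((m : ℚ) + 2) ≠ 0 := by positivity
      show (((m+1:ℕ) : ℚ) + 2) * (Sz (m + 2) : ℚ)
          = (10 * (((m+1:ℕ) : ℚ) + 2) - 14) * (Sz (m + 1) : ℚ)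
            + (18 - 9 * (((m+1:ℕ) : ℚ) + 2)) * (Sz m : ℚ)
      push_cast
      apply mul_left_cancel₀ hm2
      linear_combination hq

theorem stmt_3 (a : ℕ → ℚ) (h0 : a 0 = 1) (h1 : a 1 = 1)
    (hrec : ∀ n : ℕ, 2 ≤ n →
      (n : ℚ) * a n = (10 * n - 14) * a (n - 1) + (18 - 9 * n) * a (n - 2)) :
    ∀ n : ℕ, ∃ m : ℤ, a n = m := by
  have key : ∀ n : ℕ, a n = (Bz n : ℚ) ∧ a (n + 1) = (Bz (n + 1) : ℚ) := by
    intro n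
    induction n with
    | zero =>
        constructor
        · rw [h0]; norm_num [Bz]
        · rw [h1]; show (1 : ℚ) = ((Sz 0 : ℤ) : ℚ); rw [Sz_zero]; norm_num
    | succ m ih =>
        refine ⟨ih.2, ?_⟩
        have h := hrec (m + 2) (by omega)
        have hred : (m + 2 - 1 : ℕ) = m + 1 := by omega
        have hred2 : (m + 2 - 2 : ℕ) = m := by omega
        rw [hred, hred2] at h
        push_cast at h
        rw [ih.1, ih.2] at h
        have hb := Brec m
        have hne : ((m : ℚ) + 2) ≠ 0 := by positivity
        apply mul_left_cancel₀ hne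
        calc ((m : ℚ) + 2) * a (m + 1 + 1)
            = ((m : ℚ) + 2) * a (m + 2) := by norm_num
          _ = (10 * ((m : ℚ) + 2) - 14) * (Bz (m + 1) : ℚ)
              + (18 - 9 * ((m : ℚ) + 2)) * (Bz m : ℚ) := by linear_combination h
          _ = ((m : ℚ) + 2) * (Bz (m + 2) : ℚ) := by linear_combination - hb
          _ = ((m : ℚ) + 2) * (Bz (m + 1 + 1) : ℚ) := by norm_num
  intro n
  exact ⟨Bz n, (key n).1⟩
end

section
/- Let a : ℕ → ℤ satisfy a(0) = a(1) = 1 and a(n) = 1 + 2·∑_{m=1}^{n-1} a(m)·a(n−m) for n ≥ 2. Then for all n ≥ 0, a(n+1) = ∑_{k=0}^{n} C(n,k)·2^k·Catalan(k), where Catalan(k) = C(2k,k)/(k+1). -/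
/-!
The doubled Catalan numbers `c k = 2 ^ k * catalan k` satisfy
`c (s + 1) = 2 ∑_{i + j = s} c i c j`.
Binomially transforming a convolution produces the weights
`∑_{m + m' = N} C(m, i) C(m', j) = C(N + 1, i + j + 1)` (upper Vandermonde), which turn the
convolution square of the transform `b` into `∑_s C(N + 1, s + 1) ∑_{i + j = s} c i c j`.
Hence `b (N + 1) = 1 + 2 ∑_{m + m' = N} b m b m'`, which is the recurrence of `n ↦ a (n + 1)`.
-/

open Finset

theorem Nat.sum_antidiagonal_choose_mul_choose (N i j : ℕ) :
    ∑ p ∈ antidiagonal N, p.1.choose i * p.2.choose j = (N + 1).choose (i + j + 1) := by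
  induction N generalizing j with
  | zero => rcases i with _ | i <;> rcases j with _ | j <;> simp [Nat.choose_eq_zero_of_lt]
  | succ N ih =>
    rw [Nat.sum_antidiagonal_succ']
    rcases j with _ | j
    · have h := ih 0
      simp only [Nat.choose_zero_right, mul_one, add_zero] at h ⊢
      rw [h, Nat.choose_succ_succ' (N + 1) i]
    · have pascal (p : ℕ × ℕ) : p.1.choose i * (p.2 + 1).choose (j + 1) =
          p.1.choose i * p.2.choose j + p.1.choose i * p.2.choose (j + 1) := by
        rw [Nat.choose_succ_succ', mul_add]
      simp only [Nat.choose_zero_succ, mul_zero, zero_add, pascal, sum_add_distrib, ih]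
      rw [← add_assoc i j 1, Nat.choose_succ_succ' (N + 1) (i + j + 1)]

theorem Finset.sum_Ico_one_eq_sum_antidiagonal {M : Type*} [AddCommMonoid M] (f : ℕ → ℕ → M)
    (N : ℕ) :
    ∑ m ∈ Ico 1 (N + 2), f m (N + 2 - m) = ∑ p ∈ antidiagonal N, f (p.1 + 1) (p.2 + 1) := by
  rw [sum_Ico_eq_sum_range, Nat.sum_antidiagonal_eq_sum_range_succ (fun i j => f (i + 1) (j + 1))]
  refine sum_congr rfl fun k hk => ?_
  rw [mem_range] at hk
  congr 1 <;> omega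

section BinomialTransform

variable {R : Type*} [CommSemiring R]

def binomialTransform (c : ℕ → R) (n : ℕ) : R :=
  ∑ k ∈ range (n + 1), (n.choose k : R) * c k

theorem binomialTransform_eq_sum_range_of_le (c : ℕ → R) {n N : ℕ} (h : n ≤ N) :
    binomialTransform c n = ∑ k ∈ range (N + 1), (n.choose k : R) * c k := by
  refine sum_subset (range_subset_range.2 (by omega)) fun k _ hk => ?_
  rw [mem_range, not_lt] at hk
  rw [Nat.choose_eq_zero_of_lt (by omega), Nat.cast_zero, zero_mul]

theorem sum_antidiagonal_binomialTransform_mul (c d : ℕ → R) (N : ℕ) :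
    ∑ p ∈ antidiagonal N, binomialTransform c p.1 * binomialTransform d p.2 =
      ∑ s ∈ range (N + 1),
        ((N + 1).choose (s + 1) : R) * ∑ q ∈ antidiagonal s, c q.1 * d q.2 := by
  calc ∑ p ∈ antidiagonal N, binomialTransform c p.1 * binomialTransform d p.2
      = ∑ p ∈ antidiagonal N, ∑ i ∈ range (N + 1), ∑ j ∈ range (N + 1),
          ((p.1.choose i * p.2.choose j : ℕ) : R) * (c i * d j) := by
        refine sum_congr rfl fun p hp => ?_
        have hN := mem_antidiagonal.1 hp
        rw [binomialTransform_eq_sum_range_of_le c (N := N) (by omega),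
          binomialTransform_eq_sum_range_of_le d (N := N) (by omega), sum_mul_sum]
        refine sum_congr rfl fun i _ => sum_congr rfl fun j _ => ?_
        push_cast
        ring
    _ = ∑ i ∈ range (N + 1), ∑ j ∈ range (N + 1),
          ((N + 1).choose (i + j + 1) : R) * (c i * d j) := by
        rw [sum_comm]
        refine sum_congr rfl fun i _ => ?_
        rw [sum_comm]
        refine sum_congr rfl fun j _ => ?_
        rw [← sum_mul, ← Nat.cast_sum, Nat.sum_antidiagonal_choose_mul_choose]
    _ = ∑ i ∈ range (N + 1), ∑ j ∈ range (N + 1 - i),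
          ((N + 1).choose (i + j + 1) : R) * (c i * d j) := by
        refine sum_congr rfl fun i _ => (sum_subset (range_subset_range.2 (by omega)) ?_).symm
        intro j _ hj
        rw [mem_range, not_lt] at hj
        rw [Nat.choose_eq_zero_of_lt (by omega), Nat.cast_zero, zero_mul]
    _ = ∑ s ∈ range (N + 1), ∑ k ∈ range (s + 1),
          ((N + 1).choose (k + (s - k) + 1) : R) * (c k * d (s - k)) :=
        (sum_range_diag_flip (N + 1) fun i j => ((N + 1).choose (i + j + 1) : R) * (c i * d j)).symm
    _ = _ := by
        refine sum_congr rfl fun s _ => ?_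
        rw [Nat.sum_antidiagonal_eq_sum_range_succ (fun i j => c i * d j), mul_sum]
        refine sum_congr rfl fun k hk => ?_
        rw [Nat.add_sub_cancel' (Nat.lt_succ_iff.1 (mem_range.1 hk))]

theorem binomialTransform_succ {c : ℕ → R} {r : R} (h0 : c 0 = 1)
    (hc : ∀ s, c (s + 1) = r * ∑ q ∈ antidiagonal s, c q.1 * c q.2) (N : ℕ) :
    binomialTransform c (N + 1) =
      1 + r * ∑ p ∈ antidiagonal N, binomialTransform c p.1 * binomialTransform c p.2 := by
  rw [sum_antidiagonal_binomialTransform_mul, binomialTransform, sum_range_succ', mul_sum,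
    add_comm]
  simp only [hc, h0, Nat.choose_zero_right, Nat.cast_one, mul_one, mul_left_comm r]

end BinomialTransform

theorem two_pow_mul_catalan_succ {R : Type*} [CommSemiring R] (s : ℕ) :
    (2 : R) ^ (s + 1) * catalan (s + 1) =
      2 * ∑ q ∈ antidiagonal s, (2 ^ q.1 * catalan q.1 : R) * (2 ^ q.2 * catalan q.2) := by
  rw [catalan_succ', Nat.cast_sum, mul_sum, mul_sum]
  refine sum_congr rfl fun q hq => ?_
  rw [← mem_antidiagonal.1 hq, pow_succ', pow_add, Nat.cast_mul]
  ring

theorem choose_two_mul_div_eq_catalan {K : Type*} [Field K] [CharZero K] (k : ℕ) :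
    ((2 * k).choose k : K) / (k + 1) = catalan k := by
  rw [← Nat.centralBinom_eq_two_mul_choose, ← succ_mul_catalan_eq_centralBinom]
  push_cast
  field_simp

theorem stmt_8_general (a : ℕ → ℤ) (h1 : a 1 = 1)
    (hrec : ∀ n, 2 ≤ n → a n = 1 + 2 * ∑ m ∈ Finset.Ico 1 n, a m * a (n - m)) :
    ∀ n : ℕ, (a (n + 1) : ℚ) = ∑ k ∈ Finset.range (n + 1),
      (n.choose k : ℚ) * 2^k * (((2*k).choose k : ℚ) / (k + 1)) := by
  have hab (n : ℕ) :
      (a (n + 1) : ℚ) = binomialTransform (fun k => (2 : ℚ) ^ k * catalan k) n := by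
    induction n using Nat.strong_induction_on with
    | _ n ih =>
      rcases n with _ | N
      · simp [binomialTransform, h1]
      · rw [binomialTransform_succ (by simp) two_pow_mul_catalan_succ, hrec (N + 2) (by omega),
          sum_Ico_one_eq_sum_antidiagonal (fun i j => a i * a j)]
        push_cast
        congr 2
        refine sum_congr rfl fun p hp => ?_
        have hN := mem_antidiagonal.1 hp
        rw [ih p.1 (by omega), ih p.2 (by omega)]
  intro n
  rw [hab, binomialTransform]
  refine sum_congr rfl fun k _ => ?_
  rw [choose_two_mul_div_eq_catalan, mul_assoc]

theorem stmt_8 (a : ℕ → ℤ) (h0 : a 0 = 1) (h1 : a 1 = 1)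
    (hrec : ∀ n, 2 ≤ n → a n = 1 + 2 * ∑ m ∈ Finset.Ico 1 n, a m * a (n - m)) :
    ∀ n : ℕ, (a (n + 1) : ℚ) = ∑ k ∈ Finset.range (n + 1),
      (n.choose k : ℚ) * 2^k * (((2*k).choose k : ℚ) / (k + 1)) :=
  stmt_8_general a h1 hrec
end

section
/- Let b : ℕ → ℤ be defined by b(n) = ∑_{k=0}^{n} C(n,k)·2^k·Catalan(k). Then b satisfies the linear recurrence (n+1)·b(n) = (10n − 4)·b(n−1) + (9 − 9n)·b(n−2) for all n ≥ 2. -/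
/-!
Zeilberger's algorithm applied to `t(n, k) = C(n, k) 2^k Cat(k)`: with the certificate
`G(m, k) = k C(m+2, k) 2^k C(2k, k)`, the combination
`(m+2) ((m+3) t(m+2, k) - (10m+16) t(m+1, k) + (9m+9) t(m, k))` equals `G(m, k) - G(m, k+1)`,
and summing over `k` telescopes to `G(m, 0) - G(m, m+3) = 0`.
-/

open Finset

namespace BinomCatalan

lemma cast_sub_mul_choose_succ (n k : ℕ) :
    ((n : ℚ) + 1 - k) * (n + 1).choose k = (n + 1) * n.choose k := by
  rcases le_or_gt k (n + 1) with h | h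
  · have := Nat.choose_mul_succ_eq n k
    rw [← Nat.cast_inj (R := ℚ)] at this
    push_cast [Nat.cast_sub h] at this
    linarith
  · simp [Nat.choose_eq_zero_of_lt h, Nat.choose_eq_zero_of_lt (by omega : n < k)]

lemma cast_succ_mul_choose_succ_right (n k : ℕ) :
    ((k : ℚ) + 1) * n.choose (k + 1) = (n - k) * n.choose k := by
  rcases le_or_gt k n with h | h
  · have := Nat.choose_succ_right_eq n k
    rw [← Nat.cast_inj (R := ℚ)] at this
    push_cast [Nat.cast_sub h] at this
    linarith
  · simp [Nat.choose_eq_zero_of_lt h, Nat.choose_eq_zero_of_lt (by omega : n < k + 1)]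

lemma cast_succ_mul_choose_two_mul_succ (k : ℕ) :
    ((k : ℚ) + 1) * (2 * (k + 1)).choose (k + 1) = 2 * (2 * k + 1) * (2 * k).choose k := by
  exact_mod_cast Nat.succ_mul_centralBinom_succ k

noncomputable def term (n k : ℕ) : ℚ := n.choose k * 2 ^ k * ((2 * k).choose k / (k + 1))

lemma sum_range_term_of_le {n N : ℕ} (h : n + 1 ≤ N) :
    ∑ k ∈ range N, term n k = ∑ k ∈ range (n + 1), term n k := by
  refine (sum_subset (range_subset_range.2 h) fun k _ hk => ?_).symm
  simp [term, Nat.choose_eq_zero_of_lt (by simpa using hk : n < k)]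

noncomputable def certificate (m k : ℕ) : ℚ := k * (m + 2).choose k * 2 ^ k * (2 * k).choose k

lemma mul_recurrence_term_eq_certificate_sub (m k : ℕ) :
    ((m : ℚ) + 2) * ((m + 3) * term (m + 2) k - (10 * m + 16) * term (m + 1) k
      + (9 * m + 9) * term m k) = certificate m k - certificate m (k + 1) := by
  have h1 := cast_sub_mul_choose_succ (m + 1) k
  have h2 := cast_sub_mul_choose_succ m k
  have h3 := cast_succ_mul_choose_succ_right (m + 2) k
  have h4 := cast_succ_mul_choose_two_mul_succ k
  push_cast at h1 h2 h3
  have hm1 : (m : ℚ) + 1 ≠ 0 := by positivity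
  have hm2 : (m : ℚ) + 2 ≠ 0 := by positivity
  have hk : (k : ℚ) + 1 ≠ 0 := by positivity
  -- express every binomial coefficient through `C(m+2, k)` and `C(2k, k)`
  have e1 : ((m + 1).choose k : ℚ) = (m + 2 - k) * (m + 2).choose k / (m + 2) := by
    rw [eq_div_iff hm2]; linarith
  have e2 : (m.choose k : ℚ) = (m + 1 - k) * (m + 1).choose k / (m + 1) := by
    rw [eq_div_iff hm1]; linarith
  have e3 : ((m + 2).choose (k + 1) : ℚ) = (m + 2 - k) * (m + 2).choose k / (k + 1) := by
    rw [eq_div_iff hk]; linarith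
  have e4 : ((2 * (k + 1)).choose (k + 1) : ℚ) = 2 * (2 * k + 1) * (2 * k).choose k / (k + 1) := by
    rw [eq_div_iff hk]; linarith
  simp only [term, certificate]
  push_cast
  rw [e2, e1, e3, e4]
  field_simp
  ring

lemma recurrence_sum_range (m : ℕ) :
    ((m : ℚ) + 3) * ∑ k ∈ range (m + 3), term (m + 2) k
      - (10 * m + 16) * ∑ k ∈ range (m + 3), term (m + 1) k
      + (9 * m + 9) * ∑ k ∈ range (m + 3), term m k = 0 := by
  have hm2 : (m : ℚ) + 2 ≠ 0 := by positivity
  refine (mul_eq_zero_iff_left hm2).1 ?_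
  simp only [mul_sum, ← sum_sub_distrib, ← sum_add_distrib,
    mul_recurrence_term_eq_certificate_sub, sum_range_sub']
  simp [certificate]

end BinomCatalan

open BinomCatalan in
theorem stmt_9 (b : ℕ → ℤ)
    (hb : ∀ n, (b n : ℚ) = ∑ k ∈ Finset.range (n + 1),
      (n.choose k : ℚ) * 2^k * (((2*k).choose k : ℚ) / (k + 1))) :
    ∀ n : ℕ, 2 ≤ n →
      ((n : ℤ) + 1) * b n = (10 * n - 4) * b (n - 1) + (9 - 9 * n) * b (n - 2) := by
  intro n hn
  obtain ⟨m, rfl⟩ : ∃ m, n = m + 2 := ⟨n - 2, by omega⟩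
  have hsum (j : ℕ) (hj : j ≤ m + 2) : (b j : ℚ) = ∑ k ∈ range (m + 3), term j k := by
    rw [hb, sum_range_term_of_le (by omega)]
    rfl
  have key := recurrence_sum_range m
  rw [← hsum _ le_rfl, ← hsum (m + 1) (by omega), ← hsum m (by omega)] at key
  simp only [Nat.add_sub_cancel]
  push_cast
  have : ((m : ℤ) + 3) * b (m + 2) - (10 * m + 16) * b (m + 1) + (9 * m + 9) * b m = 0 := by
    exact_mod_cast key
  linarith
end

section
/- Let a : ℕ → ℚ satisfy a(0) = a(1) = 1 and the quadratic recurrence a(n) = 1 + 2·∑_{m=1}^{n-1} a(m)·a(n−m) for n ≥ 2, and let b(n) = a(n+1). Then the power series B = ∑_{n≥0} b(n)·Xⁿ ∈ ℚ[[X]] satisfies (1−X)·(2X·B² − B) + 1 = 0. -/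
open PowerSeries

theorem stmt_12 (a : ℕ → ℚ) (h0 : a 0 = 1) (h1 : a 1 = 1)
    (hrec : ∀ n, 2 ≤ n → a n = 1 + 2 * ∑ m ∈ Finset.Ico 1 n, a m * a (n - m)) :
    (1 - (X : ℚ⟦X⟧)) * (2 * X * (PowerSeries.mk fun n => a (n + 1))^2
      - (PowerSeries.mk fun n => a (n + 1))) + 1 = 0 := by
  set B : ℚ⟦X⟧ := PowerSeries.mk fun n => a (n + 1) with hB
  have hb : ∀ n : ℕ, a (n + 2) =
      1 + 2 * ∑ p ∈ Finset.HasAntidiagonal.antidiagonal n, a (p.1 + 1) * a (p.2 + 1) := by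
    intro n
    rw [hrec (n + 2) (by omega)]
    congr 1
    rw [Finset.Nat.sum_antidiagonal_eq_sum_range_succ
      (fun i j => a (i + 1) * a (j + 1)) n]
    rw [Finset.sum_Ico_eq_sum_range]
    congr 1
    apply Finset.sum_congr (by norm_num)
    intro i hi
    have hi' : i ≤ n := by
      have := Finset.mem_range.mp hi; omega
    congr 1
    · congr 1; omega
    · congr 1; omega
  have hcoeffB2 : ∀ n : ℕ, (coeff n) (B ^ 2) =
      ∑ p ∈ Finset.HasAntidiagonal.antidiagonal n, a (p.1 + 1) * a (p.2 + 1) := by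
    intro n
    rw [sq, coeff_mul]
    simp [hB]
  have hXB2 : ∀ n : ℕ, (coeff n) (X * B ^ 2) =
      if n = 0 then 0 else ∑ p ∈ Finset.HasAntidiagonal.antidiagonal (n - 1), a (p.1 + 1) * a (p.2 + 1) := by
    intro n
    cases n with
    | zero => simp
    | succ k => rw [coeff_succ_X_mul, hcoeffB2]; simp
  set D : ℚ⟦X⟧ := 2 * X * B ^ 2 - B with hD
  have hDcoeff : ∀ n : ℕ, (coeff n) D =
      2 * (if n = 0 then 0 else ∑ p ∈ Finset.HasAntidiagonal.antidiagonal (n - 1), a (p.1 + 1) * a (p.2 + 1))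
        - a (n + 1) := by
    intro n
    rw [hD, map_sub]
    congr 1
    · rw [show (2 : ℚ⟦X⟧) * X * B ^ 2 = (C 2) * (X * B ^ 2) by
        rw [mul_assoc]; congr 1]
      rw [coeff_C_mul, hXB2]
    · simp [hB]
  have key : (1 - (X : ℚ⟦X⟧)) * D = -1 := by
    ext n
    rw [sub_mul, one_mul, map_sub]
    cases n with
    | zero =>
      simp only [coeff_zero_X_mul, sub_zero, hDcoeff 0]
      simp [h1]
    | succ k =>
      rw [coeff_succ_X_mul, hDcoeff, hDcoeff]
      have hneg : (coeff (k + 1)) (-1 : ℚ⟦X⟧) = 0 := by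
        simp
      rw [hneg]
      cases k with
      | zero =>
        simp only [if_neg (by omega : (1 : ℕ) ≠ 0), if_pos rfl]
        have := hb 0
        simp only [Nat.add_sub_cancel] at this ⊢
        rw [this, h1]
        norm_num
      | succ m =>
        simp only [if_neg (by omega : m + 2 ≠ 0), if_neg (by omega : m + 1 ≠ 0)]
        rw [show m + 2 - 1 = m + 1 by omega, show m + 1 - 1 = m by omega]
        rw [show m + 2 + 1 = (m + 1) + 2 by omega, hb (m + 1), hb m]
        ring
  rw [key]
  ring
end
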